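/- Let ℛ be a first order reaction network on d species without purely catalytic species, and suppose the weakly connected component ℛ⁰ of the reaction graph containing the zero complex and its complement ℛ• share no species. Then every communicating class of the generic SRS ℛ in ℕ₀^d is the Cartesian product of a communicating class of ℛ⁰ in ℕ₀^{d₀} and a communicating class of ℛ• in ℕ₀^{d−d₀}, where d₀ is the number of species of ℛ⁰. -/

import Mathlib

/-- One firing step of a generic SRS on a partially ordered additive state space:
a reaction `(y, y') ∈ R` fires at `x` iff `y ≤ x`, moving the state to `x - y + y'`
(expressed additively as `x' + y = x + y'`). -/
def Step {S : Type*} [AddCommMonoid S] [PartialOrder S]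
    (R : Set (S × S)) (x x' : S) : Prop :=
  ∃ r ∈ R, r.1 ≤ x ∧ x' + r.1 = x + r.2

/-- Reachability `x ⇀ z` for a generic SRS. -/
def Reaches {S : Type*} [AddCommMonoid S] [PartialOrder S]
    (R : Set (S × S)) : S → S → Prop :=
  Relation.ReflTransGen (Step R)

/-! Since the two subnetworks have disjoint species, a reaction of the joint network moves only
its own block of coordinates, and it can fire iff its reactant fits in that block. Hence a path
of the joint network projects to a path of each subnetwork, and conversely paths of the two
subnetworks can be run one after the other; so joint reachability, and thus communication,
factors blockwise. -/

section BlockUnion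

variable {S T : Type*} [AddCommMonoid S] [PartialOrder S] [CanonicallyOrderedAdd S]
  [AddCommMonoid T] [PartialOrder T] [CanonicallyOrderedAdd T]

def blockUnion (R₀ : Set (S × S)) (R₁ : Set (T × T)) : Set ((S × T) × (S × T)) :=
  (fun r => ((r.1, 0), (r.2, 0))) '' R₀ ∪ (fun r => ((0, r.1), (0, r.2))) '' R₁

theorem step_blockUnion_iff {R₀ : Set (S × S)} {R₁ : Set (T × T)} {a b : S × T} :
    Step (blockUnion R₀ R₁) a b ↔
      (Step R₀ a.1 b.1 ∧ a.2 = b.2) ∨ (Step R₁ a.2 b.2 ∧ a.1 = b.1) := by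
  constructor
  · rintro ⟨_, ⟨r, hr, rfl⟩ | ⟨r, hr, rfl⟩, ⟨hle₀, hle₁⟩, heq⟩
    · exact .inl ⟨⟨r, hr, hle₀, congrArg Prod.fst heq⟩, by simpa using congrArg Prod.snd heq.symm⟩
    · exact .inr ⟨⟨r, hr, hle₁, congrArg Prod.snd heq⟩, by simpa using congrArg Prod.fst heq.symm⟩
  · rintro (⟨⟨r, hr, hle, heq⟩, hsnd⟩ | ⟨⟨r, hr, hle, heq⟩, hfst⟩)
    · exact ⟨_, .inl ⟨r, hr, rfl⟩, ⟨hle, zero_le⟩, Prod.ext heq (by simpa using hsnd.symm)⟩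
    · exact ⟨_, .inr ⟨r, hr, rfl⟩, ⟨zero_le, hle⟩, Prod.ext (by simpa using hfst.symm) heq⟩

theorem Reaches.blockUnion_fst {R₀ : Set (S × S)} (R₁ : Set (T × T)) {p q : S} (c : T)
    (h : Reaches R₀ p q) : Reaches (blockUnion R₀ R₁) (p, c) (q, c) :=
  Relation.ReflTransGen.lift (fun u => (u, c))
    (fun _ _ huv => step_blockUnion_iff.2 (.inl ⟨huv, rfl⟩)) _ _ h

theorem Reaches.blockUnion_snd (R₀ : Set (S × S)) {R₁ : Set (T × T)} {p q : T} (c : S)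
    (h : Reaches R₁ p q) : Reaches (blockUnion R₀ R₁) (c, p) (c, q) :=
  Relation.ReflTransGen.lift (fun u => (c, u))
    (fun _ _ huv => step_blockUnion_iff.2 (.inr ⟨huv, rfl⟩)) _ _ h

theorem reaches_blockUnion_iff {R₀ : Set (S × S)} {R₁ : Set (T × T)} {a b : S × T} :
    Reaches (blockUnion R₀ R₁) a b ↔ Reaches R₀ a.1 b.1 ∧ Reaches R₁ a.2 b.2 := by
  constructor
  · intro h
    induction h with
    | refl => exact ⟨.refl, .refl⟩
    | tail _ hstep ih =>
      rcases step_blockUnion_iff.1 hstep with ⟨h₀, hsnd⟩ | ⟨h₁, hfst⟩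
      · exact ⟨ih.1.tail h₀, hsnd ▸ ih.2⟩
      · exact ⟨hfst ▸ ih.1, ih.2.tail h₁⟩
  · rintro ⟨h₀, h₁⟩
    exact (h₀.blockUnion_fst R₁ a.2).trans (h₁.blockUnion_snd R₀ b.1)

end BlockUnion

theorem communicating_class_product_general {d₀ d₁ : ℕ}
    (R0 : Set ((Fin d₀ → ℕ) × (Fin d₀ → ℕ)))
    (R1 : Set ((Fin d₁ → ℕ) × (Fin d₁ → ℕ))) :
    let R : Set (((Fin d₀ → ℕ) × (Fin d₁ → ℕ)) × ((Fin d₀ → ℕ) × (Fin d₁ → ℕ))) :=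
      (fun r => ((r.1, 0), (r.2, 0))) '' R0 ∪ (fun r => ((0, r.1), (0, r.2))) '' R1
    ∀ x z : (Fin d₀ → ℕ) × (Fin d₁ → ℕ),
      (Reaches R x z ∧ Reaches R z x) ↔
        ((Reaches R0 x.1 z.1 ∧ Reaches R0 z.1 x.1) ∧
          (Reaches R1 x.2 z.2 ∧ Reaches R1 z.2 x.2)) := by
  intro R x z
  change Reaches (blockUnion R0 R1) x z ∧ Reaches (blockUnion R0 R1) z x ↔ _
  rw [reaches_blockUnion_iff, reaches_blockUnion_iff]
  tauto

/-- If a first order network splits as the disjoint union of a subnetwork `ℛ⁰` on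
the first `d₀` species and a subnetwork `ℛ•` on the remaining species, then two
states communicate for the joint network iff the corresponding blocks communicate
for `ℛ⁰` and for `ℛ•` respectively; i.e., every communicating class of the joint
network is the Cartesian product of a class of `ℛ⁰` and a class of `ℛ•`. -/
theorem communicating_class_product {d₀ d₁ : ℕ}
    (R0 : Set ((Fin d₀ → ℕ) × (Fin d₀ → ℕ)))
    (R1 : Set ((Fin d₁ → ℕ) × (Fin d₁ → ℕ)))
    (h0first : ∀ r ∈ R0, ∑ i, r.1 i ≤ 1) (h0ne : ∀ r ∈ R0, r.1 ≠ r.2)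
    (h1first : ∀ r ∈ R1, ∑ i, r.1 i ≤ 1) (h1ne : ∀ r ∈ R1, r.1 ≠ r.2) :
    let R : Set (((Fin d₀ → ℕ) × (Fin d₁ → ℕ)) × ((Fin d₀ → ℕ) × (Fin d₁ → ℕ))) :=
      (fun r => ((r.1, 0), (r.2, 0))) '' R0 ∪ (fun r => ((0, r.1), (0, r.2))) '' R1
    ∀ x z : (Fin d₀ → ℕ) × (Fin d₁ → ℕ),
      (Reaches R x z ∧ Reaches R z x) ↔
        ((Reaches R0 x.1 z.1 ∧ Reaches R0 z.1 x.1) ∧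
          (Reaches R1 x.2 z.2 ∧ Reaches R1 z.2 x.2)) :=
  communicating_class_product_general R0 R1
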